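/- Let G be a 3-partite undirected graph with parts A = {a₁,…,aₙ}, B = {b₁,…,bₙ}, C = {c₁,…,cₙ} and edge set E (every edge of G joins vertices from two different parts). Construct a labeled digraph H over the alphabet {(, )} with vertex set A ∪ B ∪ C ∪ A' ∪ {u}, where A' = {a₁',…,aₙ'} and u are fresh, and with the following labeled edges: (u, a₁) and (a_i, a_{i+1}) for 1 ≤ i ≤ n−1, each labeled '('; (a_i, b_j) labeled '(' for every edge {a_i, b_j} ∈ E; (b_i, c_j) labeled ')' for every edge {b_i, c_j} ∈ E; (c_i, a_j') labeled ')' for every edge {c_i, a_j} ∈ E; and (a_{i+1}', a_i') for 1 ≤ i ≤ n−1, each labeled ')'. Then the vertex a₁' is Dyck-1-reachable from u in H if and only if G contains a triangle, i.e. there exist i, j, l such that {a_i, b_j}, {b_j, c_l}, {c_l, a_i} are all edges of G. -/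

import Mathlib

/-!
Out of `A` the edges of `H` only climb the chain `a₀ → a₁ → ⋯` or cross into `B`; after that the
route `B → C → A'` is forced, and inside `A'` a walk can only descend towards `a₀'`. So a walk from
`u` to `a₀'` reads `(` into `a₀`, `i` more `(` up to `aᵢ`, one `(` into some `bⱼ`, then `))` through
some `cₗ` into some `aₘ'`, and `m` more `)` down to `a₀'`. A Dyck word is balanced, so `i + 2 = m + 2`
and `aᵢ bⱼ cₗ` is a triangle; conversely a triangle yields such a walk labelled `(ⁱ⁺² )ⁱ⁺²`.
-/

/-- The alphabet {(, )}. -/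
inductive Paren where
  | op : Paren   -- '('
  | cl : Paren   -- ')'
deriving DecidableEq

/-- The Dyck-1 language: balanced strings over one pair of parentheses. -/
inductive Dyck1 : List Paren → Prop
  | nil : Dyck1 []
  | wrap {w : List Paren} : Dyck1 w → Dyck1 (Paren.op :: w ++ [Paren.cl])
  | concat {u v : List Paren} : Dyck1 u → Dyck1 v → Dyck1 (u ++ v)

/-- A labeled walk in a `σ`-labeled digraph given by the edge relation `E`. -/
inductive LWalk {V σ : Type*} (E : V → σ → V → Prop) : V → List σ → V → Prop
  | nil (v : V) : LWalk E v [] v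
  | cons {u v w : V} {c : σ} {l : List σ} :
      E u c v → LWalk E v l w → LWalk E u (c :: l) w

/-- Vertices of the constructed graph `H`:
the copies `A`, `B`, `C` of the parts, the fresh copies `A' = {a₁',…,aₙ'}`,
and the fresh vertex `u`. -/
inductive Vtx (n : ℕ) where
  | vA : Fin n → Vtx n
  | vB : Fin n → Vtx n
  | vC : Fin n → Vtx n
  | vA' : Fin n → Vtx n
  | vu : Vtx n

/-- The labeled edges of `H`, where the tripartite graph `G` is given by the relations
`EAB`, `EBC`, `ECA` describing its edges between the respective parts
(vertices are 0-indexed, so `a₁` is `Vtx.vA ⟨0, _⟩`). -/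
def triEdge {n : ℕ} (EAB EBC ECA : Fin n → Fin n → Prop) :
    Vtx n → Paren → Vtx n → Prop := fun x c y =>
  (c = Paren.op ∧
    ((∃ h : 0 < n, x = Vtx.vu ∧ y = Vtx.vA ⟨0, h⟩) ∨
     (∃ (i : ℕ) (h : i + 1 < n), x = Vtx.vA ⟨i, by omega⟩ ∧ y = Vtx.vA ⟨i + 1, h⟩) ∨
     (∃ i j : Fin n, EAB i j ∧ x = Vtx.vA i ∧ y = Vtx.vB j))) ∨
  (c = Paren.cl ∧
    ((∃ i j : Fin n, EBC i j ∧ x = Vtx.vB i ∧ y = Vtx.vC j) ∨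
     (∃ i j : Fin n, ECA i j ∧ x = Vtx.vC i ∧ y = Vtx.vA' j) ∨
     (∃ (i : ℕ) (h : i + 1 < n), x = Vtx.vA' ⟨i + 1, h⟩ ∧ y = Vtx.vA' ⟨i, by omega⟩)))

namespace LWalk

variable {V σ : Type*} {R : V → σ → V → Prop} {u v x : V} {c : σ} {w₁ w₂ : List σ}

lemma single (h : R u c v) : LWalk R u [c] v := cons h (nil v)

lemma append (h₁ : LWalk R u w₁ v) (h₂ : LWalk R v w₂ x) : LWalk R u (w₁ ++ w₂) x := by
  induction h₁ with
  | nil => exact h₂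
  | cons e _ ih => exact cons e (ih h₂)

end LWalk

lemma Dyck1.count_op_eq_count_cl {w : List Paren} (h : Dyck1 w) :
    w.count .op = w.count .cl := by
  induction h with
  | nil => rfl
  | wrap _ ih => simp [ih]
  | concat _ _ ih₁ ih₂ => simp [ih₁, ih₂]

lemma dyck1_replicate_append_replicate (k : ℕ) :
    Dyck1 (List.replicate k .op ++ List.replicate k .cl) := by
  induction k with
  | zero => exact .nil
  | succ k ih =>
    rw [List.replicate_succ, List.replicate_succ' (a := Paren.cl)]
    simpa using ih.wrap

section

variable {n : ℕ} {EAB EBC ECA : Fin n → Fin n → Prop} {c : Paren} {y : Vtx n}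

local notation "H" => triEdge EAB EBC ECA

lemma triEdge_vu_iff : H .vu c y ↔ c = .op ∧ ∃ h : 0 < n, y = .vA ⟨0, h⟩ := by
  simp [triEdge]

lemma triEdge_vA_iff {i : Fin n} :
    H (.vA i) c y ↔ c = .op ∧
      ((∃ h : i.val + 1 < n, y = .vA ⟨i + 1, h⟩) ∨ ∃ j, EAB i j ∧ y = .vB j) := by
  simp only [triEdge, reduceCtorEq, false_and, exists_false, Vtx.vA.injEq, ↓existsAndEq, true_and,
    false_or, and_false, or_self, or_false, and_congr_right_iff]
  rintro rfl
  refine or_congr_left ⟨?_, ?_⟩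
  · rintro ⟨_, h, rfl, rfl⟩
    exact ⟨h, rfl⟩
  · rintro ⟨h, rfl⟩
    exact ⟨i, h, rfl, rfl⟩

lemma triEdge_vB_iff {j : Fin n} : H (.vB j) c y ↔ c = .cl ∧ ∃ l, EBC j l ∧ y = .vC l := by
  simp [triEdge]

lemma triEdge_vC_iff {l : Fin n} : H (.vC l) c y ↔ c = .cl ∧ ∃ m, ECA l m ∧ y = .vA' m := by
  simp [triEdge]

lemma triEdge_vA'_iff {m : Fin n} :
    H (.vA' m) c y ↔ c = .cl ∧ ∃ h : 0 < m.val, y = .vA' ⟨m - 1, by omega⟩ := by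
  simp only [triEdge, reduceCtorEq, false_and, exists_false, and_false, or_self,
    Vtx.vA'.injEq, Fin.ext_iff, exists_and_left, false_or, and_congr_right_iff]
  rintro rfl
  constructor
  · rintro ⟨i, hm, hi, rfl⟩
    simp [hm]
  · rintro ⟨hm, rfl⟩
    exact ⟨m - 1, by omega, by omega, rfl⟩

variable {w : List Paren}

lemma LWalk.count_of_vA'_vA' {m m' : Fin n} (hw : LWalk H (.vA' m) w (.vA' m')) :
    w.count .op = 0 ∧ m' + w.count .cl = m := by
  generalize hv : Vtx.vA' m = v at hw
  generalize ht : Vtx.vA' m' = t at hw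
  induction hw generalizing m with
  | nil => subst hv; cases ht; simp
  | cons e _ ih =>
    subst hv ht
    obtain ⟨rfl, hm, rfl⟩ := triEdge_vA'_iff.1 e
    obtain ⟨hop, hcl⟩ := ih rfl rfl
    dsimp only at hcl
    refine ⟨by simpa using hop, ?_⟩
    rw [List.count_cons_self]
    omega

lemma LWalk.count_of_vC_vA' {l m' : Fin n} (hw : LWalk H (.vC l) w (.vA' m')) :
    ∃ m, ECA l m ∧ w.count .op = 0 ∧ m' + w.count .cl = m + 1 := by
  cases hw with
  | cons e hw =>
    obtain ⟨rfl, m, hlm, rfl⟩ := triEdge_vC_iff.1 e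
    obtain ⟨hop, hcl⟩ := hw.count_of_vA'_vA'
    exact ⟨m, hlm, by simpa using hop, by rw [List.count_cons_self]; omega⟩

lemma LWalk.count_of_vB_vA' {j m' : Fin n} (hw : LWalk H (.vB j) w (.vA' m')) :
    ∃ l m, EBC j l ∧ ECA l m ∧ w.count .op = 0 ∧ m' + w.count .cl = m + 2 := by
  cases hw with
  | cons e hw =>
    obtain ⟨rfl, l, hjl, rfl⟩ := triEdge_vB_iff.1 e
    obtain ⟨m, hlm, hop, hcl⟩ := hw.count_of_vC_vA'
    exact ⟨l, m, hjl, hlm, by simpa using hop, by rw [List.count_cons_self]; omega⟩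

lemma LWalk.count_of_vA_vA' {i m' : Fin n} (hw : LWalk H (.vA i) w (.vA' m')) :
    ∃ i' j l m, EAB i' j ∧ EBC j l ∧ ECA l m ∧
      i + w.count .op = i' + 1 ∧ m' + w.count .cl = m + 2 := by
  generalize hv : Vtx.vA i = v at hw
  generalize ht : Vtx.vA' m' = t at hw
  induction hw generalizing i with
  | nil => subst ht; cases hv
  | cons e hw ih =>
    subst hv ht
    obtain ⟨rfl, ⟨hi, rfl⟩ | ⟨j, hij, rfl⟩⟩ := triEdge_vA_iff.1 e
    · obtain ⟨i', j, l, m, hi'j, hjl, hlm, hop, hcl⟩ := ih rfl rfl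
      dsimp only at hop
      refine ⟨i', j, l, m, hi'j, hjl, hlm, ?_, by simpa using hcl⟩
      rw [List.count_cons_self]
      omega
    · obtain ⟨l, m, hjl, hlm, hop, hcl⟩ := hw.count_of_vB_vA'
      exact ⟨i, j, l, m, hij, hjl, hlm, by simp [hop], by simpa using hcl⟩

lemma LWalk.count_of_vu_vA' {m' : Fin n} (hw : LWalk H .vu w (.vA' m')) :
    ∃ i j l m, EAB i j ∧ EBC j l ∧ ECA l m ∧
      w.count .op = i + 2 ∧ m' + w.count .cl = m + 2 := by
  cases hw with
  | cons e hw =>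
    obtain ⟨rfl, hn, rfl⟩ := triEdge_vu_iff.1 e
    obtain ⟨i, j, l, m, hij, hjl, hlm, hop, hcl⟩ := hw.count_of_vA_vA'
    dsimp only at hop
    exact ⟨i, j, l, m, hij, hjl, hlm, by rw [List.count_cons_self]; omega, by simpa using hcl⟩

lemma lwalk_vA_replicate_op (hn : 0 < n) (k : ℕ) (hk : k < n) :
    LWalk H (.vA ⟨0, hn⟩) (List.replicate k .op) (.vA ⟨k, hk⟩) := by
  induction k with
  | zero => exact .nil _
  | succ k ih =>
    rw [List.replicate_succ']
    exact (ih (by omega)).append (.single (triEdge_vA_iff.2 ⟨rfl, .inl ⟨hk, rfl⟩⟩))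

lemma lwalk_vA'_replicate_cl (hn : 0 < n) (k : ℕ) (hk : k < n) :
    LWalk H (.vA' ⟨k, hk⟩) (List.replicate k .cl) (.vA' ⟨0, hn⟩) := by
  induction k with
  | zero => exact .nil _
  | succ k ih => exact .cons (triEdge_vA'_iff.2 ⟨rfl, k.succ_pos, rfl⟩) (ih (by omega))

lemma lwalk_vu_vB {i j : Fin n} (hij : EAB i j) :
    LWalk H .vu (List.replicate (i + 2) .op) (.vB j) := by
  rw [List.replicate_succ, List.replicate_succ']
  exact .cons (triEdge_vu_iff.2 ⟨rfl, i.pos, rfl⟩) <|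
    (lwalk_vA_replicate_op i.pos i i.2).append (.single (triEdge_vA_iff.2 ⟨rfl, .inr ⟨j, hij, rfl⟩⟩))

lemma lwalk_vB_vA' (hn : 0 < n) {i j l : Fin n} (hjl : EBC j l) (hli : ECA l i) :
    LWalk H (.vB j) (List.replicate (i + 2) .cl) (.vA' ⟨0, hn⟩) := by
  rw [List.replicate_succ, List.replicate_succ]
  exact .cons (triEdge_vB_iff.2 ⟨rfl, l, hjl, rfl⟩) <|
    .cons (triEdge_vC_iff.2 ⟨rfl, i, hli, rfl⟩) (lwalk_vA'_replicate_cl hn i i.2)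

end

/-- The vertex `a₁'` is Dyck-1-reachable from `u` in `H` iff `G` has a triangle. -/
theorem stmt5 {n : ℕ} (hn : 0 < n) (EAB EBC ECA : Fin n → Fin n → Prop) :
    (∃ w : List Paren, Dyck1 w ∧
        LWalk (triEdge EAB EBC ECA) Vtx.vu w (Vtx.vA' ⟨0, hn⟩)) ↔
      ∃ i j l : Fin n, EAB i j ∧ EBC j l ∧ ECA l i := by
  constructor
  · rintro ⟨w, hw, hwalk⟩
    obtain ⟨i, j, l, m, hij, hjl, hlm, hop, hcl⟩ := hwalk.count_of_vu_vA'
    have him : i = m := by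
      have := hw.count_op_eq_count_cl
      dsimp only at hcl
      ext
      omega
    exact ⟨i, j, l, hij, hjl, him ▸ hlm⟩
  · rintro ⟨i, j, l, hij, hjl, hli⟩
    exact ⟨_, dyck1_replicate_append_replicate (i + 2),
      (lwalk_vu_vB hij).append (lwalk_vB_vA' hn hjl hli)⟩
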